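/- arXiv:1311.6847 — 2 statements merged into one kernel-verified Lean document; each statement's English description precedes it below -/
import Mathlib

section
/- The ring of invariants of the formal power series ring ℂ[[u,v]] under the action of the group μ_k of k-th roots of unity, where ζ acts by u ↦ ζu and v ↦ ζ⁻¹v, is isomorphic to ℂ[[x,y,s]]/(xy − s^k) via x = u^k, y = v^k, s = uv. -/
/-!
The substitution `x ↦ u^k, y ↦ v^k, s ↦ uv` sends `x^a y^b s^c` to `u^(ka+c) v^(kb+c)`, so its
image is the set of series supported on exponents `(e₀, e₁)` with `k ∣ e₀ - e₁`, which are exactly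
the `μ_k`-invariant ones. Such an exponent has a unique preimage `(a, b, c)` with `a = 0` or
`b = 0`, and modulo `xy - s^k` every series is congruent to one supported on these exponents;
hence the kernel is generated by `xy - s^k`.
-/

open MvPowerSeries Finsupp Finset

noncomputable section

variable {R : Type*} [CommRing R] {k : ℕ}

namespace MvPowerSeries

variable {σ τ : Type*}

theorem hasSubst_monomial_one [Finite σ] {m : σ → τ →₀ ℕ} (hm : ∀ s, m s ≠ 0) :
    HasSubst (fun s ↦ monomial (m s) (1 : R)) :=
  hasSubst_of_constantCoeff_zero fun s ↦ by
    classical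
    rw [← coeff_zero_eq_constantCoeff_apply, coeff_monomial, if_neg (hm s).symm]

theorem prod_pow_monomial_one (m : σ → τ →₀ ℕ) (d : σ →₀ ℕ) :
    d.prod (fun s n ↦ monomial (m s) (1 : R) ^ n) = monomial (linearCombination ℕ m d) 1 := by
  simp only [monomial_pow, one_pow, Finsupp.prod, prod_monomial, prod_const_one,
    linearCombination_apply, Finsupp.sum]

theorem coeff_subst_monomial_one [Finite σ] {m : σ → τ →₀ ℕ} (hm : ∀ s, m s ≠ 0)
    (f : MvPowerSeries σ R) (e : τ →₀ ℕ) :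
    coeff e (subst (fun s ↦ monomial (m s) (1 : R)) f) =
      ∑ᶠ d ∈ linearCombination ℕ m ⁻¹' {e}, coeff d f := by
  classical
  rw [coeff_subst (hasSubst_monomial_one hm), finsum_mem_def]
  congr 1 with d
  simp [prod_pow_monomial_one, coeff_monomial, Set.indicator_apply, eq_comm]

end MvPowerSeries

theorem Ideal.quotientKerEquivRange_mk {S A B : Type*} [CommSemiring S] [Ring A] [Algebra S A]
    [Semiring B] [Algebra S B] (f : A →ₐ[S] B) (x : A) :
    (quotientKerEquivRange f (Quotient.mk _ x) : B) = f x := by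
  simp [quotientKerEquivRange]

theorem Finset.sum_range_div_add_one {M : Type*} [AddCommMonoid M] (hk : 0 < k) (g : ℕ → M)
    (c : ℕ) : ∑ j ∈ range (c / k + 1), g j =
      g 0 + if k ≤ c then ∑ j ∈ range ((c - k) / k + 1), g (j + 1) else 0 := by
  rw [sum_range_succ', add_comm]
  split_ifs with hc
  · rw [Nat.div_eq_sub_div hk hc]
  · rw [Nat.div_eq_of_lt (not_le.mp hc), sum_range_zero]

namespace CyclicInvariants

def xysExp (a b c : ℕ) : Fin 3 →₀ ℕ := equivFunOnFinite.symm ![a, b, c]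

@[simp] lemma xysExp_apply_zero (a b c : ℕ) : xysExp a b c 0 = a := rfl
@[simp] lemma xysExp_apply_one (a b c : ℕ) : xysExp a b c 1 = b := rfl
@[simp] lemma xysExp_apply_two (a b c : ℕ) : xysExp a b c 2 = c := rfl

lemma xysExp_le_xysExp {a b c a' b' c' : ℕ} :
    xysExp a b c ≤ xysExp a' b' c' ↔ a ≤ a' ∧ b ≤ b' ∧ c ≤ c' := by
  simp [Finsupp.le_def, Fin.forall_fin_succ]

lemma xysExp_sub_xysExp (a b c a' b' c' : ℕ) :
    xysExp a b c - xysExp a' b' c' = xysExp (a - a') (b - b') (c - c') := by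
  ext i; fin_cases i <;> rfl

lemma X_zero_mul_X_one_eq_monomial :
    (X 0 * X 1 : MvPowerSeries (Fin 3) R) = monomial (xysExp 1 1 0) 1 := by
  rw [X, X, monomial_mul_monomial, one_mul]
  congr 2; ext i; fin_cases i <;> simp [xysExp]

lemma X_two_pow_eq_monomial : (X 2 ^ k : MvPowerSeries (Fin 3) R) = monomial (xysExp 0 0 k) 1 := by
  rw [X_pow_eq]
  congr 2; ext i; fin_cases i <;> simp [xysExp]

/-- Exponents of the monomials `x^a y^b s^c` not divisible by `xy`: normal forms modulo
`xy - s^k`. -/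
def IsXYFree (d : Fin 3 →₀ ℕ) : Prop := d 0 = 0 ∨ d 1 = 0

theorem exists_coeff_sub_mul_eq_zero_of_not_isXYFree (hk : 0 < k) (f : MvPowerSeries (Fin 3) R) :
    ∃ D, ∀ d, ¬ IsXYFree d → coeff d (f - (X 0 * X 1 - X 2 ^ k) * D) = 0 := by
  -- `D` is the power series part of `f / (xy - s^k) = ∑ⱼ s^(kj) f / (xy)^(j+1)`.
  let D : MvPowerSeries (Fin 3) R := fun d ↦
    ∑ j ∈ range (d 2 / k + 1), coeff (xysExp (d 0 + 1 + j) (d 1 + 1 + j) (d 2 - k * j)) f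
  have hD (d) : coeff d D =
      ∑ j ∈ range (d 2 / k + 1), coeff (xysExp (d 0 + 1 + j) (d 1 + 1 + j) (d 2 - k * j)) f :=
    rfl
  refine ⟨D, fun d hd ↦ ?_⟩
  obtain ⟨a, b, c, rfl⟩ : ∃ a b c, d = xysExp (a + 1) (b + 1) c := by
    unfold IsXYFree at hd
    exact ⟨d 0 - 1, d 1 - 1, d 2, by ext i; fin_cases i <;> simp <;> omega⟩
  have hxy : coeff (xysExp (a + 1) (b + 1) c) (X 0 * X 1 * D) = coeff (xysExp a b c) D := by
    rw [X_zero_mul_X_one_eq_monomial, coeff_monomial_mul,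
      if_pos (xysExp_le_xysExp.mpr (by omega)), one_mul, xysExp_sub_xysExp]
    simp
  have hs : coeff (xysExp (a + 1) (b + 1) c) (X 2 ^ k * D) =
      if k ≤ c then coeff (xysExp (a + 1) (b + 1) (c - k)) D else 0 := by
    simp [X_two_pow_eq_monomial, coeff_monomial_mul, xysExp_le_xysExp, xysExp_sub_xysExp]
  have hshift (j : ℕ) : xysExp (a + 1 + (j + 1)) (b + 1 + (j + 1)) (c - k * (j + 1)) =
      xysExp (a + 1 + 1 + j) (b + 1 + 1 + j) (c - k - k * j) := by
    rw [Nat.mul_succ, Nat.sub_sub, add_comm (k * j)]; ring_nf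
  rw [sub_mul, map_sub, map_sub, hxy, hs]
  simp only [hD, xysExp_apply_zero, xysExp_apply_one, xysExp_apply_two]
  rw [sum_range_div_add_one hk]
  simp only [hshift, add_zero, mul_zero, Nat.sub_zero]
  abel

def substExp (k : ℕ) : Fin 3 → Fin 2 →₀ ℕ := ![single 0 k, single 1 k, single 0 1 + single 1 1]

lemma substExp_ne_zero (hk : 0 < k) (i : Fin 3) : substExp k i ≠ 0 := by
  fin_cases i <;> simp [substExp, hk.ne']

abbrev uvExp (k : ℕ) : (Fin 3 →₀ ℕ) →ₗ[ℕ] (Fin 2 →₀ ℕ) := linearCombination ℕ (substExp k)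

@[simp] lemma uvExp_apply_zero (d : Fin 3 →₀ ℕ) : uvExp k d 0 = k * d 0 + d 2 := by
  simp [linearCombination_apply, sum_fintype, Fin.sum_univ_three, substExp, mul_comm]

@[simp] lemma uvExp_apply_one (d : Fin 3 →₀ ℕ) : uvExp k d 1 = k * d 1 + d 2 := by
  simp [linearCombination_apply, sum_fintype, Fin.sum_univ_three, substExp, mul_comm]

lemma uvExp_injOn (hk : 0 < k) : Set.InjOn (uvExp k) {d | IsXYFree d} := by
  intro d hd d' hd' h
  have h0 := congr($h 0)
  have h1 := congr($h 1)
  simp only [uvExp_apply_zero, uvExp_apply_one] at h0 h1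
  have h01 : d 0 + d' 1 = d' 0 + d 1 := Nat.eq_of_mul_eq_mul_left hk (by linarith)
  have h00 : d 0 = d' 0 := by
    rcases hd with hd | hd <;> rcases hd' with hd' | hd' <;> omega
  have h11 : d 1 = d' 1 := by omega
  have h22 : d 2 = d' 2 := by rw [h00] at h0; omega
  ext i; fin_cases i <;> assumption

lemma dvd_uvExp_sub (d : Fin 3 →₀ ℕ) : (k : ℤ) ∣ (uvExp k d 0 : ℤ) - uvExp k d 1 :=
  ⟨d 0 - d 1, by simp; ring⟩

lemma exists_isXYFree_uvExp_eq {e : Fin 2 →₀ ℕ} (h : (k : ℤ) ∣ (e 0 : ℤ) - e 1) :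
    ∃ d, IsXYFree d ∧ uvExp k d = e := by
  obtain ⟨q, hq⟩ := h
  obtain ⟨n, rfl | rfl⟩ := Int.eq_nat_or_neg q
  · refine ⟨xysExp n 0 (e 1), Or.inr rfl, ?_⟩
    ext i; fin_cases i <;> simp; linarith
  · refine ⟨xysExp 0 n (e 0), Or.inl rfl, ?_⟩
    ext i; fin_cases i <;> simp; linarith

def substUV (k : ℕ) (hk : 0 < k) : MvPowerSeries (Fin 3) R →ₐ[R] MvPowerSeries (Fin 2) R :=
  substAlgHom (hasSubst_monomial_one (substExp_ne_zero hk))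

lemma substUV_X (hk : 0 < k) (i : Fin 3) :
    substUV k hk (X i : MvPowerSeries (Fin 3) R) = monomial (substExp k i) 1 := by
  simp [substUV, subst_X (hasSubst_monomial_one (substExp_ne_zero hk))]

lemma substUV_X_zero (hk : 0 < k) : substUV k hk (X 0 : MvPowerSeries (Fin 3) R) = X 0 ^ k := by
  rw [substUV_X, X_pow_eq]; rfl

lemma substUV_X_one (hk : 0 < k) : substUV k hk (X 1 : MvPowerSeries (Fin 3) R) = X 1 ^ k := by
  rw [substUV_X, X_pow_eq]; rfl

lemma substUV_X_two (hk : 0 < k) :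
    substUV k hk (X 2 : MvPowerSeries (Fin 3) R) = X 0 * X 1 := by
  rw [substUV_X, X, X, monomial_mul_monomial, one_mul]; rfl

lemma substUV_X_zero_mul_X_one_sub_X_two_pow (hk : 0 < k) :
    substUV k hk (X 0 * X 1 - X 2 ^ k : MvPowerSeries (Fin 3) R) = 0 := by
  rw [map_sub, map_mul, map_pow, substUV_X_zero, substUV_X_one, substUV_X_two, mul_pow, sub_self]

lemma coeff_substUV (hk : 0 < k) (f : MvPowerSeries (Fin 3) R) (e : Fin 2 →₀ ℕ) :
    coeff e (substUV k hk f) = ∑ᶠ d ∈ uvExp k ⁻¹' {e}, coeff d f := by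
  simp [substUV, coeff_subst_monomial_one (substExp_ne_zero hk)]

lemma coeff_uvExp_substUV (hk : 0 < k) {f : MvPowerSeries (Fin 3) R}
    (hf : ∀ d, ¬ IsXYFree d → coeff d f = 0) {d : Fin 3 →₀ ℕ} (hd : IsXYFree d) :
    coeff (uvExp k d) (substUV k hk f) = coeff d f := by
  rw [coeff_substUV, finsum_mem_def, finsum_eq_single _ d]
  · exact Set.indicator_of_mem (Set.mem_preimage.mpr rfl) (fun d ↦ coeff d f)
  intro d' hne
  refine Set.indicator_apply_eq_zero.mpr fun hd' ↦ by_contra fun h' ↦ ?_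
  exact hne (uvExp_injOn hk (by_contra fun h ↦ h' (hf d' h)) hd hd')

theorem ker_substUV (hk : 0 < k) :
    RingHom.ker (substUV k hk) = Ideal.span {(X 0 * X 1 - X 2 ^ k : MvPowerSeries (Fin 3) R)} := by
  refine le_antisymm (fun f hf ↦ ?_)
    ((Ideal.span_singleton_le_iff_mem _).mpr (substUV_X_zero_mul_X_one_sub_X_two_pow hk))
  obtain ⟨D, hD⟩ := exists_coeff_sub_mul_eq_zero_of_not_isXYFree hk f
  have hrem : f - (X 0 * X 1 - X 2 ^ k) * D = 0 := by
    ext d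
    by_cases hd : IsXYFree d
    · rw [← coeff_uvExp_substUV hk hD hd, map_sub, map_mul,
        substUV_X_zero_mul_X_one_sub_X_two_pow, zero_mul, sub_zero, RingHom.mem_ker.mp hf,
        map_zero, map_zero]
    · rw [hD d hd, map_zero]
  exact Ideal.mem_span_singleton'.mpr ⟨D, by linear_combination -hrem⟩

theorem mem_range_substUV_iff (hk : 0 < k) {g : MvPowerSeries (Fin 2) R} :
    g ∈ (substUV k hk).range ↔ ∀ e, coeff e g ≠ 0 → (k : ℤ) ∣ (e 0 : ℤ) - e 1 := by
  classical
  rw [AlgHom.mem_range]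
  constructor
  · rintro ⟨f, rfl⟩ e he
    rw [coeff_substUV] at he
    obtain ⟨d, rfl, -⟩ := exists_ne_zero_of_finsum_mem_ne_zero he
    exact dvd_uvExp_sub d
  · intro hg
    let f : MvPowerSeries (Fin 3) R := fun d ↦ if IsXYFree d then coeff (uvExp k d) g else 0
    have hf (d) : coeff d f = if IsXYFree d then coeff (uvExp k d) g else 0 := rfl
    have hf_of_not (d) (hd : ¬ IsXYFree d) : coeff d f = 0 := by rw [hf, if_neg hd]
    refine ⟨f, ext fun e ↦ ?_⟩
    by_cases he : (k : ℤ) ∣ (e 0 : ℤ) - e 1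
    · obtain ⟨d, hd, rfl⟩ := exists_isXYFree_uvExp_eq he
      rw [coeff_uvExp_substUV hk hf_of_not hd, hf, if_pos hd]
    · rw [not_imp_comm.mp (hg e) he, coeff_substUV]
      exact finsum_mem_eq_zero_of_forall_eq_zero fun d hd ↦ (he (hd ▸ dvd_uvExp_sub d)).elim

lemma forall_zpow_eq_one_iff_dvd (hk : 0 < k) (n : ℤ) :
    (∀ ζ : ℂˣ, ζ ^ k = 1 → (ζ : ℂ) ^ n = 1) ↔ (k : ℤ) ∣ n := by
  refine ⟨fun h ↦ ?_, fun ⟨m, hm⟩ ζ hζ ↦ ?_⟩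
  · have hprim := Complex.isPrimitiveRoot_exp k hk.ne'
    refine (hprim.zpow_eq_one_iff_dvd n).mp (h (hprim.isUnit hk.ne').unit ?_)
    ext; simpa using hprim.pow_eq_one
  · rw [hm, zpow_mul, zpow_natCast, ← Units.val_pow_eq_pow_val, hζ, Units.val_one, one_zpow]

theorem forall_invariant_iff (hk : 0 < k) (f : MvPowerSeries (Fin 2) ℂ) :
    (∀ ζ : ℂˣ, ζ ^ k = 1 → ∀ d : Fin 2 →₀ ℕ,
      (ζ : ℂ) ^ (d 0 : ℤ) * (ζ : ℂ) ^ (-(d 1 : ℤ)) * coeff d f = coeff d f) ↔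
    ∀ e, coeff e f ≠ 0 → (k : ℤ) ∣ (e 0 : ℤ) - e 1 := by
  have hzpow (ζ : ℂˣ) (d : Fin 2 →₀ ℕ) :
      (ζ : ℂ) ^ (d 0 : ℤ) * (ζ : ℂ) ^ (-(d 1 : ℤ)) = (ζ : ℂ) ^ ((d 0 : ℤ) - d 1) := by
    rw [← zpow_add₀ ζ.ne_zero, sub_eq_add_neg]
  simp only [hzpow]
  refine ⟨fun h e he ↦ ?_, fun h ζ hζ d ↦ ?_⟩
  · exact (forall_zpow_eq_one_iff_dvd hk _).mp fun ζ hζ ↦ (mul_eq_right₀ he).mp (h ζ hζ e)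
  · by_cases hd : coeff d f = 0
    · rw [hd, mul_zero]
    · rw [(forall_zpow_eq_one_iff_dvd hk _).mpr (h d hd) ζ hζ, one_mul]

end CyclicInvariants

end

open CyclicInvariants

open MvPowerSeries in
/-- the subring of μ_k-invariants of ℂ[[u,v]] (where `ζ·(u,v) = (ζu, ζ⁻¹v)`, so a
monomial `u^{d₀}v^{d₁}` is scaled by `ζ^{d₀}ζ^{-d₁}`) is isomorphic to
`ℂ[[x,y,s]]/(xy − s^k)` via `x ↦ u^k`, `y ↦ v^k`, `s ↦ uv`. -/
theorem stmt_0 (k : ℕ) (hk : 1 ≤ k) :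
    ∃ A : Subring (MvPowerSeries (Fin 2) ℂ),
      (A : Set (MvPowerSeries (Fin 2) ℂ)) =
        {f | ∀ ζ : ℂˣ, ζ ^ k = 1 → ∀ d : Fin 2 →₀ ℕ,
          (ζ : ℂ) ^ (d 0 : ℤ) * (ζ : ℂ) ^ (-(d 1 : ℤ)) * coeff d f = coeff d f} ∧
      ∃ e : (MvPowerSeries (Fin 3) ℂ ⧸
              Ideal.span {(X 0 * X 1 - X 2 ^ k : MvPowerSeries (Fin 3) ℂ)}) ≃+* A,
        (e (Ideal.Quotient.mk _ (X 0)) : MvPowerSeries (Fin 2) ℂ) = X 0 ^ k ∧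
        (e (Ideal.Quotient.mk _ (X 1)) : MvPowerSeries (Fin 2) ℂ) = X 1 ^ k ∧
        (e (Ideal.Quotient.mk _ (X 2)) : MvPowerSeries (Fin 2) ℂ) = X 0 * X 1 := by
  refine ⟨(substUV (R := ℂ) k hk).range.toSubring, ?_, ?_⟩
  · ext f
    exact (mem_range_substUV_iff hk).trans (forall_invariant_iff hk f).symm
  · refine ⟨(Ideal.quotEquivOfEq (ker_substUV (R := ℂ) hk).symm).trans
      (Ideal.quotientKerEquivRange (substUV (R := ℂ) k hk)).toRingEquiv, ?_, ?_, ?_⟩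
      <;> simp only [RingEquiv.trans_apply, Ideal.quotEquivOfEq_mk, AlgEquiv.coe_ringEquiv,
        Ideal.quotientKerEquivRange_mk, substUV_X_zero, substUV_X_one, substUV_X_two]
end

section
/- Let μ_k act on the loop group G((w)) by (ζ·γ)(w) = η(ζ)⁻¹ γ(ζw) η(ζ), where η: μ_k → T is the restriction of a cocharacter. Then for any γ ∈ G((z)), the element γ_η(w) := η(w) γ(w^k) η(w)⁻¹ is μ_k-invariant, and γ ↦ γ_η defines a group isomorphism from G((z)) onto the invariant subgroup (G((w)))^{μ_k}. -/
/-!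
Let `D = η(w)`. Since `σ_ζ(w) = ζ w` and `η` is a cocharacter, `σ_ζ(D) = η(ζ) D`; hence `g` is
fixed by the twisted action `g ↦ η(ζ)⁻¹ σ_ζ(g) η(ζ)` exactly when `D⁻¹ g D` is fixed by `σ_ζ`.
Testing against a primitive `k`-th root of unity, a Laurent series is fixed by every such `σ_ζ`
iff it is supported on `kℤ`, i.e. iff it lies in the image of `z ↦ w^k`. So the invariant
elements are precisely the `D γ(w^k) D⁻¹`, with `det γ = 1` because `z ↦ w^k` is injective.
-/

open HahnSeries

namespace Matrix

variable {n R S : Type*} [Fintype n] [DecidableEq n] [CommRing R] [CommRing S]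

def diagonalCocharacter (a : n → ℤ) : Rˣ →* (Matrix n n R)ˣ where
  toFun t :=
    { val := diagonal fun i => ↑(t ^ a i)
      inv := diagonal fun i => ↑(t ^ (-(a i)))
      val_inv := by simp [diagonal_mul_diagonal]
      inv_val := by simp [diagonal_mul_diagonal] }
  map_one' := by ext : 1; simp
  map_mul' s t := by ext : 1; simp [mul_zpow, diagonal_mul_diagonal]

@[simp]
lemma coe_diagonalCocharacter (a : n → ℤ) (t : Rˣ) :
    (diagonalCocharacter a t : Matrix n n R) = diagonal fun i => ↑(t ^ a i) := rfl

@[simp]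
lemma coe_diagonalCocharacter_inv (a : n → ℤ) (t : Rˣ) :
    (↑(diagonalCocharacter a t)⁻¹ : Matrix n n R) = diagonal fun i => ↑(t ^ (-(a i))) :=
  rfl

lemma map_diagonalCocharacter (f : R →+* S) (a : n → ℤ) (t : Rˣ) :
    Units.map (RingHom.mapMatrix (m := n) f : Matrix n n R →* Matrix n n S)
      (diagonalCocharacter a t) = diagonalCocharacter a (Units.map (f : R →* S) t) := by
  ext : 1
  simp [diagonal_map, Units.coe_map, ← map_zpow]

lemma _root_.RingHom.mapMatrix_units_conj (f : R →+* S) (u : (Matrix n n R)ˣ) (g : Matrix n n R) :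
    f.mapMatrix ((↑u⁻¹ : Matrix n n R) * g * (u : Matrix n n R)) =
      (↑(Units.map (RingHom.mapMatrix (m := n) f : Matrix n n R →* Matrix n n S) u)⁻¹ :
          Matrix n n S) * f.mapMatrix g *
        (Units.map (RingHom.mapMatrix (m := n) f : Matrix n n R →* Matrix n n S) u :
          Matrix n n S) := by
  simp only [map_mul, Units.coe_map_inv, Units.coe_map, MonoidHom.coe_coe]

lemma mapMatrix_conj_diagonalCocharacter_eq_self_iff (f : R →+* R) (a : n → ℤ) {w c : Rˣ}
    (hw : Units.map (f : R →* R) w = c * w) (g : Matrix n n R) :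
    f.mapMatrix ((↑(diagonalCocharacter a w)⁻¹ : Matrix n n R) * g *
          (diagonalCocharacter a w : Matrix n n R)) =
        (↑(diagonalCocharacter a w)⁻¹ : Matrix n n R) * g *
          (diagonalCocharacter a w : Matrix n n R) ↔
      (↑(diagonalCocharacter a c)⁻¹ : Matrix n n R) * f.mapMatrix g *
          (diagonalCocharacter a c : Matrix n n R) = g := by
  set W : (Matrix n n R)ˣ := diagonalCocharacter a w
  set C : (Matrix n n R)ˣ := diagonalCocharacter a c
  rw [RingHom.mapMatrix_units_conj, map_diagonalCocharacter, hw, map_mul, _root_.mul_inv_rev,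
    Units.val_mul, Units.val_mul,
    show (↑W⁻¹ : Matrix n n R) * ↑C⁻¹ * f.mapMatrix g * (C * W) =
      ↑W⁻¹ * (↑C⁻¹ * f.mapMatrix g * C) * W by simp only [mul_assoc],
    Units.mul_left_inj, Units.mul_right_inj]

lemma _root_.RingHom.mem_range_mapMatrix_iff (f : R →+* S) (M : Matrix n n S) :
    M ∈ Set.range f.mapMatrix ↔ ∀ i j, M i j ∈ Set.range f := by
  constructor
  · rintro ⟨N, rfl⟩ i j
    exact ⟨N i j, rfl⟩
  · intro h
    choose N hN using h
    exact ⟨Matrix.of N, ext hN⟩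

namespace SpecialLinearGroup

def conjUnit (u : (Matrix n n R)ˣ) : SpecialLinearGroup n R ≃* SpecialLinearGroup n R where
  toFun A := ⟨u * A * (↑u⁻¹ : Matrix n n R), by rw [det_units_conj, A.det_coe]⟩
  invFun A := ⟨(↑u⁻¹ : Matrix n n R) * A * u, by rw [det_units_conj', A.det_coe]⟩
  left_inv A := Subtype.ext <| by
    simp only [mul_assoc, Units.inv_mul_cancel_left, Units.inv_mul, mul_one]
  right_inv A := Subtype.ext <| by
    simp only [mul_assoc, Units.mul_inv_cancel_left, Units.mul_inv, mul_one]
  map_mul' A B := Subtype.ext <| by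
    change (u : Matrix n n R) * (A * B) * (↑u⁻¹ : Matrix n n R) =
      u * A * (↑u⁻¹ : Matrix n n R) * (u * B * (↑u⁻¹ : Matrix n n R))
    simp only [mul_assoc, Units.inv_mul_cancel_left]

@[simp]
lemma coe_conjUnit (u : (Matrix n n R)ˣ) (A : SpecialLinearGroup n R) :
    (conjUnit u A : Matrix n n R) = u * A * (↑u⁻¹ : Matrix n n R) := rfl

lemma map_injective {f : R →+* S} (hf : Function.Injective f) :
    Function.Injective (map f : SpecialLinearGroup n R →* SpecialLinearGroup n S) :=
  fun _ _ h => Subtype.ext (Matrix.map_injective hf (congrArg Subtype.val h))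

lemma mem_range_conjUnit_comp_map_iff {f : R →+* S} (hf : Function.Injective f)
    (u : (Matrix n n S)ˣ) (g : SpecialLinearGroup n S) :
    g ∈ Set.range ((conjUnit u).toMonoidHom.comp (map f)) ↔
      (↑u⁻¹ : Matrix n n S) * g * (u : Matrix n n S) ∈ Set.range f.mapMatrix := by
  constructor
  · rintro ⟨A, rfl⟩
    refine ⟨A, ?_⟩
    simp only [MonoidHom.coe_comp, Function.comp_apply, MulEquiv.coe_toMonoidHom, coe_conjUnit,
      map_apply_coe, mul_assoc, Units.inv_mul_cancel_left, Units.inv_mul, mul_one]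
  · rintro ⟨M, hM⟩
    have hdet : M.det = 1 := hf <| by
      rw [RingHom.map_det, hM, det_units_conj', g.det_coe, map_one]
    refine ⟨⟨M, hdet⟩, Subtype.ext ?_⟩
    change (u : Matrix n n S) * f.mapMatrix M * (↑u⁻¹ : Matrix n n S) = g
    rw [hM]
    simp only [mul_assoc, Units.mul_inv_cancel_left, Units.mul_inv, mul_one]

end SpecialLinearGroup

end Matrix

section RootsOfUnity

variable {K : Type*} [Field K] {k : ℕ}

lemma IsPrimitiveRoot.eq_zero_of_zpow_mul_eq_self {ζ : K} (hζ : IsPrimitiveRoot ζ k)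
    {m : ℤ} (hm : ¬ (k : ℤ) ∣ m) {c : K} (h : ζ ^ m * c = c) : c = 0 :=
  (mul_left_eq_self₀.mp h).resolve_left fun h1 => hm ((hζ.zpow_eq_one_iff_dvd m).mp h1)

lemma zpow_eq_one_of_pow_eq_one_of_dvd {ζ : K} (hζ : ζ ^ k = 1) {m : ℤ} (hm : (k : ℤ) ∣ m) :
    ζ ^ m = 1 := by
  obtain ⟨t, rfl⟩ := hm
  rw [zpow_mul, zpow_natCast, hζ, one_zpow]

end RootsOfUnity

namespace LaurentSeries

section Expand

variable {R : Type*} [Zero R] {k : ℕ}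

def contract (k : ℕ) (hk : 0 < k) (f : LaurentSeries R) : LaurentSeries R where
  coeff q := f.coeff (k * q)
  isPWO_support' := by
    have hk' : (0 : ℤ) < k := by exact_mod_cast hk
    refine (f.isPWO_support.image_of_monotone
      (fun _ _ h => Int.ediv_le_ediv hk' h : Monotone (· / (k : ℤ)))).mono ?_
    intro q hq
    exact ⟨k * q, hq, Int.mul_ediv_cancel_left q hk'.ne'⟩

@[simp]
lemma coeff_contract (hk : 0 < k) (f : LaurentSeries R) (q : ℤ) :
    (contract k hk f).coeff q = f.coeff (k * q) := rfl

lemma mem_range_iff_of_coeff_eq_expand (hk : 0 < k) {E : LaurentSeries R → LaurentSeries R}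
    (hE : ∀ f m, (E f).coeff m = if (k : ℤ) ∣ m then f.coeff (m / k) else 0)
    (f : LaurentSeries R) : f ∈ Set.range E ↔ ∀ m, ¬ (k : ℤ) ∣ m → f.coeff m = 0 := by
  constructor
  · rintro ⟨g, rfl⟩ m hm
    rw [hE, if_neg hm]
  · intro h
    refine ⟨contract k hk f, HahnSeries.ext <| funext fun m => ?_⟩
    by_cases hm : (k : ℤ) ∣ m
    · rw [hE, if_pos hm, coeff_contract, Int.mul_ediv_cancel' hm]
    · rw [hE, if_neg hm, h m hm]

end Expand

variable {K : Type*} [Field K]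

lemma forall_pow_eq_one_apply_eq_self_iff {k : ℕ} (hk : 0 < k) {ζ₀ : K}
    (hζ₀ : IsPrimitiveRoot ζ₀ k) {σ : K → LaurentSeries K → LaurentSeries K}
    (hσ : ∀ ζ : K, ζ ≠ 0 → ∀ f m, (σ ζ f).coeff m = ζ ^ m * f.coeff m) (f : LaurentSeries K) :
    (∀ ζ : K, ζ ^ k = 1 → σ ζ f = f) ↔ ∀ m, ¬ (k : ℤ) ∣ m → f.coeff m = 0 := by
  constructor
  · intro h m hm
    refine hζ₀.eq_zero_of_zpow_mul_eq_self hm ?_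
    rw [← hσ ζ₀ (hζ₀.ne_zero hk.ne'), h ζ₀ hζ₀.pow_eq_one]
  · intro h ζ hζ
    ext m
    rw [hσ ζ (ne_zero_pow hk.ne' (hζ ▸ one_ne_zero))]
    by_cases hm : (k : ℤ) ∣ m
    · rw [zpow_eq_one_of_pow_eq_one_of_dvd hζ hm, one_mul]
    · rw [h m hm, mul_zero]

noncomputable def unitX : (LaurentSeries K)ˣ := Units.mk0 (single 1 1) (single_ne_zero one_ne_zero)

@[simp]
lemma coe_unitX_zpow (m : ℤ) :
    ((unitX ^ m : (LaurentSeries K)ˣ) : LaurentSeries K) = single m 1 := by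
  rw [Units.val_zpow_eq_zpow_val, RatFunc.single_zpow]
  rfl

@[simp]
lemma coe_map_C_zpow (u : Kˣ) (m : ℤ) :
    ((Units.map (C : K →+* LaurentSeries K) u ^ m : (LaurentSeries K)ˣ) : LaurentSeries K) =
      C ((u : K) ^ m) := by
  rw [← map_zpow, Units.coe_map, MonoidHom.coe_coe, Units.val_zpow_eq_zpow_val]

lemma map_unitX_eq_of_coeff {σ : LaurentSeries K →+* LaurentSeries K} (ζ : Kˣ)
    (hσ : ∀ f m, (σ f).coeff m = (ζ : K) ^ m * f.coeff m) :
    Units.map (σ : LaurentSeries K →* LaurentSeries K) unitX =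
      Units.map (C : K →+* LaurentSeries K) ζ * unitX := by
  ext m
  rw [Units.coe_map, MonoidHom.coe_coe, Units.val_mul, Units.coe_map, MonoidHom.coe_coe, hσ,
    C_mul_eq_smul, coeff_smul]
  rcases eq_or_ne m 1 with rfl | hm
  · simp [unitX]
  · simp [unitX, coeff_single_of_ne hm]

end LaurentSeries

open LaurentSeries Matrix.SpecialLinearGroup in
theorem mem_range_conjUnit_comp_map_iff_forall_twist_eq {n K : Type*} [Fintype n] [DecidableEq n]
    [Field K] {k : ℕ} (hk : 0 < k) {ζ₀ : K} (hζ₀ : IsPrimitiveRoot ζ₀ k)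
    {σ : K → LaurentSeries K →+* LaurentSeries K}
    (hσ : ∀ ζ : K, ζ ≠ 0 → ∀ f m, (σ ζ f).coeff m = ζ ^ m * f.coeff m)
    {E : LaurentSeries K →+* LaurentSeries K}
    (hE : ∀ f m, (E f).coeff m = if (k : ℤ) ∣ m then f.coeff (m / k) else 0)
    (a : n → ℤ) (g : Matrix.SpecialLinearGroup n (LaurentSeries K)) :
    g ∈ Set.range ((conjUnit (Matrix.diagonalCocharacter a unitX)).toMonoidHom.comp (map E)) ↔
      ∀ ζ : K, ζ ^ k = 1 →
        Matrix.diagonal (fun i => (C (ζ ^ (-(a i))) : LaurentSeries K)) *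
            (σ ζ).mapMatrix (g : Matrix n n (LaurentSeries K)) *
          Matrix.diagonal (fun i => (C (ζ ^ a i) : LaurentSeries K)) = g := by
  set D : (Matrix n n (LaurentSeries K))ˣ := Matrix.diagonalCocharacter a unitX
  rw [mem_range_conjUnit_comp_map_iff E.injective, RingHom.mem_range_mapMatrix_iff]
  simp_rw [mem_range_iff_of_coeff_eq_expand hk hE,
    ← forall_pow_eq_one_apply_eq_self_iff (σ := fun ζ => σ ζ) hk hζ₀ hσ]
  set M : Matrix n n (LaurentSeries K) :=
    (↑D⁻¹ : Matrix n n (LaurentSeries K)) * g * (D : Matrix n n (LaurentSeries K))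
  have hfix : ∀ ζ : K, ζ ^ k = 1 → ((σ ζ).mapMatrix M = M ↔
        Matrix.diagonal (fun i => (C (ζ ^ (-(a i))) : LaurentSeries K)) *
          (σ ζ).mapMatrix (g : Matrix n n (LaurentSeries K)) *
          Matrix.diagonal (fun i => (C (ζ ^ a i) : LaurentSeries K)) = g) := by
    intro ζ hζ
    have hζ0 : ζ ≠ 0 := ne_zero_pow hk.ne' (hζ ▸ one_ne_zero)
    convert Matrix.mapMatrix_conj_diagonalCocharacter_eq_self_iff (σ ζ) a
      (map_unitX_eq_of_coeff (Units.mk0 ζ hζ0) (hσ ζ hζ0)) g using 4 <;>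
      simp only [Matrix.coe_diagonalCocharacter, Matrix.coe_diagonalCocharacter_inv,
        coe_map_C_zpow, Units.val_mk0]
  exact ⟨fun hM ζ hζ => (hfix ζ hζ).mp (Matrix.ext fun i j => hM i j ζ hζ),
    fun hg i j ζ hζ => Matrix.ext_iff.mpr ((hfix ζ hζ).mpr (hg ζ hζ)) i j⟩

open Matrix in
theorem stmt_8_general (n k : ℕ) (hk : 0 < k)
    (σ : ℂ → (LaurentSeries ℂ →+* LaurentSeries ℂ))
    (hσ : ∀ ζ : ℂ, ζ ≠ 0 → ∀ (f : LaurentSeries ℂ) (m : ℤ),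
      ((σ ζ) f).coeff m = ζ ^ m * f.coeff m)
    (E : LaurentSeries ℂ →+* LaurentSeries ℂ)
    (hE : ∀ (f : LaurentSeries ℂ) (m : ℤ),
      (E f).coeff m = if (k : ℤ) ∣ m then f.coeff (m / (k : ℤ)) else 0)
    (a : Fin n → ℤ) :
    ∃ Φ : Matrix.SpecialLinearGroup (Fin n) (LaurentSeries ℂ) →*
        Matrix.SpecialLinearGroup (Fin n) (LaurentSeries ℂ),
      (∀ γ, (↑(Φ γ) : Matrix (Fin n) (Fin n) (LaurentSeries ℂ)) =
        diagonal (fun i => (HahnSeries.single (a i) 1 : LaurentSeries ℂ)) *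
          (E.mapMatrix (↑γ : Matrix (Fin n) (Fin n) (LaurentSeries ℂ))) *
          diagonal (fun i => (HahnSeries.single (-(a i)) 1 : LaurentSeries ℂ))) ∧
      Function.Injective Φ ∧
      Set.range Φ = {g : Matrix.SpecialLinearGroup (Fin n) (LaurentSeries ℂ) | ∀ ζ : ℂ, ζ ^ k = 1 →
        diagonal (fun i => (HahnSeries.single 0 (ζ ^ (-(a i))) : LaurentSeries ℂ)) *
          ((σ ζ).mapMatrix (↑g : Matrix (Fin n) (Fin n) (LaurentSeries ℂ))) *
          diagonal (fun i => (HahnSeries.single 0 (ζ ^ (a i)) : LaurentSeries ℂ)) =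
          (↑g : Matrix (Fin n) (Fin n) (LaurentSeries ℂ))} := by
  let η : (Matrix (Fin n) (Fin n) (LaurentSeries ℂ))ˣ := diagonalCocharacter a LaurentSeries.unitX
  refine ⟨(SpecialLinearGroup.conjUnit η).toMonoidHom.comp (SpecialLinearGroup.map E),
    fun γ => ?_, (SpecialLinearGroup.conjUnit η).injective.comp
      (SpecialLinearGroup.map_injective E.injective), ?_⟩
  · simp only [MonoidHom.coe_comp, Function.comp_apply, MulEquiv.coe_toMonoidHom,
      SpecialLinearGroup.coe_conjUnit, SpecialLinearGroup.map_apply_coe, η,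
      coe_diagonalCocharacter, coe_diagonalCocharacter_inv, LaurentSeries.coe_unitX_zpow]
  · ext g
    rw [mem_range_conjUnit_comp_map_iff_forall_twist_eq hk
      (Complex.isPrimitiveRoot_exp k hk.ne') hσ hE]
    simp only [Set.mem_ofPred_eq, C_apply]

open Matrix in
/-- μ_k acts on the loop group `G((w))` by `(ζ·γ)(w) = η(ζ)⁻¹ γ(ζw) η(ζ)`.  For
`γ ∈ G((z))` the element `γ_η(w) = η(w) γ(w^k) η(w)⁻¹` is μ_k-invariant and `γ ↦ γ_η` is a
group isomorphism of `G((z))` onto `(G((w)))^{μ_k}`.  Model: `G = SL_n`, loops are matrices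
over the Laurent series field `K = ℂ((w))`; `σ ζ : K →+* K` is `w ↦ ζw` (coefficientwise
`ζ^m`-scaling), `E : K →+* K` is `z ↦ w^k`, and the (integral multiple of the) cocharacter η
is the diagonal `a : Fin n → ℤ`, so `η(w) = diag(w^{a i})` and `η(ζ) = diag(ζ^{a i})`. -/
theorem stmt_8 (n k : ℕ) (hn : 0 < n) (hk : 0 < k)
    (σ : ℂ → (LaurentSeries ℂ →+* LaurentSeries ℂ))
    (hσ : ∀ ζ : ℂ, ζ ≠ 0 → ∀ (f : LaurentSeries ℂ) (m : ℤ),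
      ((σ ζ) f).coeff m = ζ ^ m * f.coeff m)
    (E : LaurentSeries ℂ →+* LaurentSeries ℂ)
    (hE : ∀ (f : LaurentSeries ℂ) (m : ℤ),
      (E f).coeff m = if (k : ℤ) ∣ m then f.coeff (m / (k : ℤ)) else 0)
    (a : Fin n → ℤ) (hsum : ∑ i, a i = 0) :
    ∃ Φ : Matrix.SpecialLinearGroup (Fin n) (LaurentSeries ℂ) →*
        Matrix.SpecialLinearGroup (Fin n) (LaurentSeries ℂ),
      (∀ γ, (↑(Φ γ) : Matrix (Fin n) (Fin n) (LaurentSeries ℂ)) =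
        diagonal (fun i => (HahnSeries.single (a i) 1 : LaurentSeries ℂ)) *
          (E.mapMatrix (↑γ : Matrix (Fin n) (Fin n) (LaurentSeries ℂ))) *
          diagonal (fun i => (HahnSeries.single (-(a i)) 1 : LaurentSeries ℂ))) ∧
      Function.Injective Φ ∧
      Set.range Φ = {g : Matrix.SpecialLinearGroup (Fin n) (LaurentSeries ℂ) | ∀ ζ : ℂ, ζ ^ k = 1 →
        diagonal (fun i => (HahnSeries.single 0 (ζ ^ (-(a i))) : LaurentSeries ℂ)) *
          ((σ ζ).mapMatrix (↑g : Matrix (Fin n) (Fin n) (LaurentSeries ℂ))) *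
          diagonal (fun i => (HahnSeries.single 0 (ζ ^ (a i)) : LaurentSeries ℂ)) =
          (↑g : Matrix (Fin n) (Fin n) (LaurentSeries ℂ))} :=
  stmt_8_general n k hk σ hσ E hE a
end
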